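/- Let W be a string over {A, X, B} such that the cyclic sentence (W) contains the substring XB (read cyclically). Then |(W)| = 0. -/

import Mathlib

/-!
The "tight puzzle" of Schwartz–Tabachnikov.  Strings over the alphabet `{A, X, B}`;
word list (coefficient, weight): `X (1,0)`, `XA (1,1)`, `XAA (1,1)`, `AXA (2,1)`,
`AAA (-1,1)`, `BA (-1,1)`, `ABA (-1,1)`, `XXA (-1,1)`; in a parsing the word `X` may
never be immediately followed by the word `XA` or the word `BA`.
-/

open scoped Classical

/-- The three-letter alphabet. -/
inductive PLetter | A | X | B
deriving DecidableEq

/-- Strings over the alphabet. -/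
abbrev PWord := List PLetter

/-- The tight puzzle word list. -/
def tightWords : List PWord :=
  [[PLetter.X], [PLetter.X, PLetter.A], [PLetter.X, PLetter.A, PLetter.A],
   [PLetter.A, PLetter.X, PLetter.A], [PLetter.A, PLetter.A, PLetter.A],
   [PLetter.B, PLetter.A], [PLetter.A, PLetter.B, PLetter.A],
   [PLetter.X, PLetter.X, PLetter.A]]

/-- Coefficients of the words of the tight puzzle (`AXA ↦ 2`; `AAA, BA, ABA, XXA ↦ -1`;
`X, XA, XAA ↦ 1`). -/
def tightCoeff (w : PWord) : ℤ :=
  if w = [PLetter.A, PLetter.X, PLetter.A] then 2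
  else if w = [PLetter.A, PLetter.A, PLetter.A] ∨ w = [PLetter.B, PLetter.A] ∨
      w = [PLetter.A, PLetter.B, PLetter.A] ∨ w = [PLetter.X, PLetter.X, PLetter.A] then -1
  else 1

/-- Weights of the words: the word `X` has weight `0`, all other words weight `1`. -/
def wordWt (w : PWord) : ℕ := if w = [PLetter.X] then 0 else 1

/-- The forbidden adjacency: the word `X` immediately followed by `XA` or `BA`. -/
def Bad (u v : PWord) : Prop :=
  u = [PLetter.X] ∧ (v = [PLetter.X, PLetter.A] ∨ v = [PLetter.B, PLetter.A])

/-- The contribution `coefficient · t^weight ∈ ℤ[t]` of a parsing `L`. -/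
noncomputable def parseVal (c : PWord → ℤ) (L : List PWord) : Polynomial ℤ :=
  Polynomial.C ((L.map c).prod) * Polynomial.X ^ ((L.map wordWt).sum)

/-- `L` is a parsing in the tight puzzle: all its words are on the word list and the
forbidden adjacency never occurs. -/
def TightChain (L : List PWord) : Prop :=
  (∀ w ∈ L, w ∈ tightWords) ∧ List.Chain' (fun u v => ¬ Bad u v) L

/-- The *core* of a string: what remains after deleting all leading and trailing `X`s. -/
def core (s : PWord) : PWord :=
  ((s.dropWhile (· == PLetter.X)).reverse.dropWhile (· == PLetter.X)).reverse

/-- `L` is a parsing of the bi-infinite string `⋯XX·W·XX⋯` (with the infinitely many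
padding `X`s parsed as copies of the word `X` and trimmed away): the words of `L`
concatenate to `W` up to padding by `X`s on either side, `L` neither starts nor ends
with the word `X`, and (because of the padding `X`-words on the left) the first word
of `L` is not `XA` or `BA`. -/
def IsOpenParsing (W : PWord) (L : List PWord) : Prop :=
  TightChain L ∧ core L.flatten = core W ∧
  ∀ h : L ≠ [],
    L.head h ≠ [PLetter.X] ∧ L.head h ≠ [PLetter.X, PLetter.A] ∧
    L.head h ≠ [PLetter.B, PLetter.A] ∧ L.getLast h ≠ [PLetter.X]

/-- `(r, L)` is a parsing of the cyclic string `(W)`: reading the necklace of the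
letters of `W` starting at position `r`, the words of `L` concatenate to it, the
forbidden adjacency does not occur (cyclically), and `r < (last word).length`
(so that every parsing of the necklace is counted exactly once). -/
def IsCyclicParsing (W : PWord) (r : ℕ) (L : List PWord) : Prop :=
  TightChain L ∧
  ∃ h : L ≠ [], L.flatten = W.rotate r ∧ r < (L.getLast h).length ∧
    ¬ Bad (L.getLast h) (L.head h)

/-- `L` is a parsing of the locked string `[W]`: the words of `L` concatenate exactly
to `W`, no padding allowed. -/
def IsLockedParsing (W : PWord) (L : List PWord) : Prop :=
  TightChain L ∧ L.flatten = W

/-- The nine words of both puzzles, as a function (used to enumerate parsings). -/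
def wordOf : Fin 9 → PWord :=
  ![[PLetter.X], [PLetter.X, PLetter.A], [PLetter.X, PLetter.A, PLetter.A],
    [PLetter.X, PLetter.B, PLetter.A], [PLetter.A, PLetter.X, PLetter.A],
    [PLetter.A, PLetter.A, PLetter.A], [PLetter.B, PLetter.A],
    [PLetter.A, PLetter.B, PLetter.A], [PLetter.X, PLetter.X, PLetter.A]]

/-- The open value `|W| ∈ ℤ[t]`: the sum of `coefficient · t^weight` over all parsings
of the bi-infinite string `⋯XX·W·XX⋯` (any such parsing consists of at most
`W.length + 2` words). -/
noncomputable def openVal (W : PWord) : Polynomial ℤ :=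
  ∑ k ∈ Finset.range (W.length + 3), ∑ f : Fin k → Fin 9,
    if IsOpenParsing W ((List.ofFn f).map wordOf) then
      parseVal tightCoeff ((List.ofFn f).map wordOf)
    else 0

/-- The cyclic value `|(W)| ∈ ℤ[t]`: the sum of `coefficient · t^weight` over all
parsings of the cyclic string `(W)`. -/
noncomputable def cycVal (W : PWord) : Polynomial ℤ :=
  ∑ r ∈ Finset.range W.length, ∑ k ∈ Finset.range (W.length + 1), ∑ f : Fin k → Fin 9,
    if IsCyclicParsing W r ((List.ofFn f).map wordOf) then
      parseVal tightCoeff ((List.ofFn f).map wordOf)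
    else 0

/-- The locked value `|[W]| ∈ ℤ[t]`: the sum of `coefficient · t^weight` over all
parsings whose concatenation is exactly `W`. -/
noncomputable def lockVal (W : PWord) : Polynomial ℤ :=
  ∑ k ∈ Finset.range (W.length + 1), ∑ f : Fin k → Fin 9,
    if IsLockedParsing W ((List.ofFn f).map wordOf) then
      parseVal tightCoeff ((List.ofFn f).map wordOf)
    else 0

/-- The original puzzle word list (the tight list together with `XBA`). -/
def origWords : List PWord :=
  tightWords ++ [[PLetter.X, PLetter.B, PLetter.A]]

/-- Coefficients of the words of the original puzzle (`AXA ↦ 2`; `XXA ↦ -2`;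
`AAA, BA, ABA ↦ -1`; `X, XA, XAA, XBA ↦ 1`). -/
def origCoeff (w : PWord) : ℤ :=
  if w = [PLetter.A, PLetter.X, PLetter.A] then 2
  else if w = [PLetter.X, PLetter.X, PLetter.A] then -2
  else if w = [PLetter.A, PLetter.A, PLetter.A] ∨ w = [PLetter.B, PLetter.A] ∨
      w = [PLetter.A, PLetter.B, PLetter.A] then -1
  else 1

/-- `(r, L)` is a parsing of the cyclic string `(W)` in the original puzzle (all
parsings allowed, no adjacency restriction): reading the necklace of the letters of
`W` starting at position `r`, the words of `L` concatenate to it, and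
`r < (last word).length` (so that every parsing of the necklace is counted exactly
once). -/
def IsOrigCyclicParsing (W : PWord) (r : ℕ) (L : List PWord) : Prop :=
  (∀ w ∈ L, w ∈ origWords) ∧
  ∃ h : L ≠ [], L.flatten = W.rotate r ∧ r < (L.getLast h).length

/-- The cyclic value `|(W)| ∈ ℤ[t]` in the original puzzle. -/
noncomputable def origCycVal (W : PWord) : Polynomial ℤ :=
  ∑ r ∈ Finset.range W.length, ∑ k ∈ Finset.range (W.length + 1), ∑ f : Fin k → Fin 9,
    if IsOrigCyclicParsing W r ((List.ofFn f).map wordOf) then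
      parseVal origCoeff ((List.ofFn f).map wordOf)
    else 0

/-!
Mark an occurrence of `XB` in the necklace. In every parsing the marked `X` is either the first
letter of a word `XBA`, or the word `X` followed by `BA`, the only word that begins with `B`.
Exchanging `XBA` with `X`, `BA` keeps the weight (`1 = 0 + 1`) and changes the sign of the
coefficient (`1` against `1 · (-1)`), so it is a sign-reversing involution on parsings and their
contributions cancel in pairs. In the encoding `(r, L)` of a parsing, the exchange moves the
offset `r` between `2` and `0` when the exchanged words straddle the start of `W`.
-/

namespace XBCancellation

open PLetter

lemma parseVal_append (c : PWord → ℤ) (L₁ L₂ : List PWord) :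
    parseVal c (L₁ ++ L₂) = parseVal c L₁ * parseVal c L₂ := by
  simp only [parseVal, List.map_append, List.prod_append, List.sum_append, map_mul, pow_add]
  ring

lemma parseVal_X_BA : parseVal origCoeff [[X], [B, A]] = -parseVal origCoeff [[X, B, A]] := by
  simp [parseVal, origCoeff, wordWt]

def flat (l : List (Fin 9)) : PWord := (l.map wordOf).flatten

@[simp] lemma flat_nil : flat [] = [] := rfl

@[simp] lemma flat_cons (a : Fin 9) (l : List (Fin 9)) : flat (a :: l) = wordOf a ++ flat l :=
  rfl

@[simp] lemma flat_append (l₁ l₂ : List (Fin 9)) : flat (l₁ ++ l₂) = flat l₁ ++ flat l₂ := by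
  simp [flat]

@[simp] lemma wordOf_zero : wordOf 0 = [X] := rfl
@[simp] lemma wordOf_three : wordOf 3 = [X, B, A] := rfl
@[simp] lemma wordOf_six : wordOf 6 = [B, A] := rfl

lemma wordOf_ne_nil : ∀ a : Fin 9, wordOf a ≠ [] := by decide

lemma wordOf_mem_origWords : ∀ a : Fin 9, wordOf a ∈ origWords := by decide

lemma length_le_length_flat (l : List (Fin 9)) : l.length ≤ (flat l).length := by
  induction l with
  | nil => simp
  | cons a l ih =>
    have := List.length_pos_of_ne_nil (wordOf_ne_nil a)
    simp only [flat_cons, List.length_cons, List.length_append]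
    omega

abbrev IsParsing (W : PWord) (x : ℕ × List (Fin 9)) : Prop :=
  IsOrigCyclicParsing W x.1 (x.2.map wordOf)

lemma isParsing_iff (W : PWord) (r : ℕ) (l : List (Fin 9)) :
    IsParsing W (r, l) ↔ flat l = W.rotate r ∧ ∃ a ∈ l.getLast?, r < (wordOf a).length := by
  constructor
  · rintro ⟨-, hne, hflat, hlast⟩
    have hl : l ≠ [] := by simpa using hne
    refine ⟨hflat, l.getLast hl, List.getLast?_eq_some_getLast hl, ?_⟩
    rwa [List.getLast_map] at hlast
  · rintro ⟨hflat, a, hlast, hr⟩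
    have hl : l ≠ [] := by rintro rfl; simp at hlast
    refine ⟨by simpa using fun b _ => wordOf_mem_origWords b, by simpa using hl, hflat, ?_⟩
    obtain rfl : l.getLast hl = a := by simpa [List.getLast?_eq_some_getLast hl] using hlast
    simpa [List.getLast_map] using hr

lemma length_le_of_isParsing {W : PWord} {x : ℕ × List (Fin 9)} (hx : IsParsing W x) :
    x.2.length ≤ W.length := by
  have h := length_le_length_flat x.2
  rwa [((isParsing_iff W x.1 x.2).1 hx).1, List.length_rotate] at h

/-- Splits a parsing `l` just before the word that contains letter `i` of `flat l`. -/
def splitAtLetter : List (Fin 9) → ℕ → List (Fin 9) × List (Fin 9)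
  | [], _ => ([], [])
  | a :: l, i =>
    if i < (wordOf a).length then ([], a :: l)
    else ((a :: (splitAtLetter l (i - (wordOf a).length)).1),
      (splitAtLetter l (i - (wordOf a).length)).2)

lemma splitAtLetter_append_cons (P : List (Fin 9)) (a : Fin 9) (Q : List (Fin 9)) :
    splitAtLetter (P ++ a :: Q) (flat P).length = (P, a :: Q) := by
  induction P with
  | nil => simp [splitAtLetter, List.length_pos_of_ne_nil (wordOf_ne_nil a)]
  | cons b P ih => simp [splitAtLetter, ih]

lemma exists_eq_append_cons_of_lt_length_flat {l : List (Fin 9)} {i : ℕ}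
    (h : i < (flat l).length) :
    ∃ P a Q, l = P ++ a :: Q ∧ (flat P).length ≤ i ∧ i < (flat P).length + (wordOf a).length := by
  induction l generalizing i with
  | nil => simp at h
  | cons b l ih =>
    by_cases hb : i < (wordOf b).length
    · exact ⟨[], b, l, by simp, by simp, by simpa using hb⟩
    · simp only [flat_cons, List.length_append] at h
      obtain ⟨P, a, Q, rfl, h₁, h₂⟩ := ih (i := i - (wordOf b).length) (by omega)
      exact ⟨b :: P, a, Q, rfl, by simp only [flat_cons, List.length_append]; omega,
        by simp only [flat_cons, List.length_append]; omega⟩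

/-- The only words in which an `X` is followed by a `B` are `XBA` and `X`. -/
lemma eq_three_or_eq_zero_of_drop_append_eq {a : Fin 9} {o : ℕ} (ho : o < (wordOf a).length)
    {rest t : PWord} (h : (wordOf a).drop o ++ rest = X :: B :: t) :
    (a = 3 ∧ o = 0) ∨ (a = 0 ∧ o = 0 ∧ rest.head? = some B) := by
  fin_cases a <;> simp [wordOf] at ho h ⊢ <;> (try interval_cases o) <;> simp_all

lemma head?_eq_six_of_head?_flat {l : List (Fin 9)} (h : (flat l).head? = some B) :
    l.head? = some 6 := by
  have hB : ∀ a : Fin 9, (wordOf a).head? = some B → a = 6 := by decide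
  cases l with
  | nil => simp at h
  | cons a l =>
    rw [flat_cons, List.head?_append_of_ne_nil _ (wordOf_ne_nil a)] at h
    simp [hB a h]

lemma add_sub_mod_eq_iff {N r₀ r i : ℕ} (hr₀ : r₀ < N) (hr : r ≤ N) (hi : i < N) :
    (r₀ + N - r) % N = i ↔ (r + i) % N = r₀ := by
  constructor
  · rintro rfl
    rw [Nat.add_mod_mod, show r + (r₀ + N - r) = r₀ + N by omega, Nat.add_mod_right,
      Nat.mod_eq_of_lt hr₀]
  · rintro rfl
    rcases lt_or_ge (r + i) N with h | h
    · rw [Nat.mod_eq_of_lt h, show r + i + N - r = i + N by omega, Nat.add_mod_right,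
        Nat.mod_eq_of_lt hi]
    · rw [Nat.mod_eq_sub_mod h, Nat.mod_eq_of_lt (show r + i - N < N by omega),
        show r + i - N + N - r = i by omega,
        Nat.mod_eq_of_lt hi]

/-- In a parsing `l` of `W.rotate r`, the occurrence of `XB` at position `r₀` of `W` is covered
either by a word `XBA`, or by a word `X` followed, possibly cyclically, by a word `BA`. -/
lemma exists_split_at_XB {W : PWord} {r₀ r : ℕ} {l : List (Fin 9)} (hr₀ : r₀ < W.length)
    (hXB : [X, B] <+: W.rotate r₀) (hr : r < W.length) (hl : flat l = W.rotate r) :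
    ∃ P Q, l = P ++ Q ∧ (flat P).length = (r₀ + W.length - r) % W.length ∧
      ((∃ Q', Q = 3 :: Q') ∨ (∃ Q', Q = 0 :: 6 :: Q') ∨ (Q = [0] ∧ ∃ P', P = 6 :: P')) := by
  set N := W.length
  set i := (r₀ + N - r) % N with hi
  have hiN : i < N := Nat.mod_lt _ (by omega)
  have hlen : (flat l).length = N := by rw [hl, List.length_rotate]
  obtain ⟨P, a, Q, rfl, hP, ha⟩ := exists_eq_append_cons_of_lt_length_flat (hlen ▸ hiN)
  set o := i - (flat P).length
  have hrot : (flat (P ++ a :: Q)).rotate i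
      = (wordOf a).drop o ++ (flat Q ++ flat P ++ (wordOf a).take o) := by
    rw [List.rotate_eq_drop_append_take (by omega), show i = (flat P).length + o by omega]
    simp only [flat_append, flat_cons, List.drop_length_add_append, List.take_length_add_append,
      List.drop_append_of_le_length (show o ≤ (wordOf a).length by omega),
      List.take_append_of_le_length (show o ≤ (wordOf a).length by omega), List.append_assoc]
  obtain ⟨t, ht⟩ := hXB
  have hmark : (wordOf a).drop o ++ (flat Q ++ flat P ++ (wordOf a).take o) = X :: B :: t := by
    rw [← hrot, hl, List.rotate_rotate, ← List.rotate_mod,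
      (add_sub_mod_eq_iff hr₀ hr.le hiN).1 hi.symm, ← ht]
    rfl
  rcases eq_three_or_eq_zero_of_drop_append_eq (by omega) hmark with ⟨rfl, ho⟩ | ⟨rfl, ho, hB⟩
  · exact ⟨P, 3 :: Q, rfl, by omega, Or.inl ⟨Q, rfl⟩⟩
  · rw [ho, List.take_zero, List.append_nil] at hB
    cases Q with
    | nil =>
      obtain ⟨P', rfl⟩ : ∃ P', P = 6 :: P' := by
        simpa [List.head?_eq_some_iff] using head?_eq_six_of_head?_flat (by simpa using hB)
      exact ⟨6 :: P', [0], rfl, by omega, Or.inr (Or.inr ⟨rfl, P', rfl⟩)⟩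
    | cons q Q =>
      rw [List.head?_append_of_ne_nil _ (by simp [wordOf_ne_nil])] at hB
      obtain rfl : q = 6 := by simpa using head?_eq_six_of_head?_flat hB
      exact ⟨P, 0 :: 6 :: Q, rfl, by omega, Or.inr (Or.inl ⟨Q, rfl⟩)⟩

lemma rotate_two_eq_append_pair_iff {α : Type*} {l s : List α} {a b : α} :
    l.rotate 2 = s ++ [a, b] ↔ l = a :: b :: s := by
  constructor
  · intro h
    have hlen := congrArg List.length h
    rcases l with _ | ⟨c, _ | ⟨d, t⟩⟩
    · simp at hlen
    · simp at hlen
    · have h' : t ++ [c, d] = s ++ [a, b] := by simpa using h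
      obtain ⟨rfl, hcd⟩ := List.append_inj h' (by simpa using congrArg List.length h')
      simp_all
  · rintro rfl
    simp

lemma isParsing_split_iff {W : PWord} {r : ℕ} {P Q : List (Fin 9)} :
    IsParsing W (r, P ++ 0 :: 6 :: Q) ↔ IsParsing W (r, P ++ 3 :: Q) ∧ ¬(Q = [] ∧ r = 2) := by
  rcases List.eq_nil_or_concat' Q with rfl | ⟨Q, q, rfl⟩
  · simp [isParsing_iff]
    grind
  · simp [isParsing_iff, List.getLast?_cons]

lemma isParsing_wrap_iff {W : PWord} {P : List (Fin 9)} :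
    IsParsing W (0, 6 :: (P ++ [0])) ↔ IsParsing W (2, P ++ [3]) := by
  simp only [isParsing_iff, flat_append, flat_cons, flat_nil, wordOf_zero, wordOf_six,
    wordOf_three, List.rotate_zero, List.append_nil]
  rw [show flat P ++ [X, B, A] = (flat P ++ [X]) ++ [B, A] by simp,
    @eq_comm _ (flat P ++ [X] ++ [B, A]), rotate_two_eq_append_pair_iff, eq_comm]
  simp [List.getLast?_cons]

noncomputable def value (x : ℕ × List (Fin 9)) : Polynomial ℤ :=
  parseVal origCoeff (x.2.map wordOf)

lemma value_split (r r' : ℕ) (P Q : List (Fin 9)) :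
    value (r, P ++ 0 :: 6 :: Q) = -value (r', P ++ 3 :: Q) := by
  simp only [value, List.map_append, List.map_cons, wordOf_zero, wordOf_six, wordOf_three]
  rw [show [X] :: [B, A] :: Q.map wordOf = [[X], [B, A]] ++ Q.map wordOf from rfl,
    show [X, B, A] :: Q.map wordOf = [[X, B, A]] ++ Q.map wordOf from rfl,
    parseVal_append, parseVal_append, parseVal_append, parseVal_append, parseVal_X_BA]
  ring

lemma value_wrap (r r' : ℕ) (P : List (Fin 9)) :
    value (r, 6 :: (P ++ [0])) = -value (r', P ++ [3]) := by
  have h := parseVal_X_BA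
  rw [show [[X], [B, A]] = [[X]] ++ [[B, A]] from rfl, parseVal_append] at h
  simp only [value, List.map_append, List.map_cons, List.map_nil, wordOf_zero, wordOf_six,
    wordOf_three]
  rw [← List.singleton_append, parseVal_append, parseVal_append, parseVal_append]
  linear_combination (parseVal origCoeff (P.map wordOf)) * h

/-- Exchanges the word `XBA` at the head of the second list with the words `X`, `BA`. -/
def toggle (r : ℕ) : List (Fin 9) → List (Fin 9) → ℕ × List (Fin 9)
  | P, 3 :: Q => if Q = [] ∧ r = 2 then (0, 6 :: (P ++ [0])) else (r, P ++ 0 :: 6 :: Q)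
  | P, 0 :: 6 :: Q => (r, P ++ 3 :: Q)
  | 6 :: P, [0] => (2, P ++ [3])
  | P, Q => (r, P ++ Q)

/-- The letter at position `r₀` of `W` is letter `(r₀ + W.length - r) % W.length` of
`W.rotate r`. -/
def flipXB (W : PWord) (r₀ : ℕ) (x : ℕ × List (Fin 9)) : ℕ × List (Fin 9) :=
  Function.uncurry (toggle x.1) (splitAtLetter x.2 ((r₀ + W.length - x.1) % W.length))

lemma flipXB_append_cons {W : PWord} {r₀ r : ℕ} {P Q : List (Fin 9)} {a : Fin 9}
    (h : (flat P).length = (r₀ + W.length - r) % W.length) :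
    flipXB W r₀ (r, P ++ a :: Q) = toggle r P (a :: Q) := by
  rw [flipXB, ← h, splitAtLetter_append_cons]
  rfl

lemma flipXB_wrap {W : PWord} {r₀ : ℕ} {P : List (Fin 9)}
    (hW : W.length = (flat P).length + 3) (hr₀ : r₀ = (flat P).length + 2) :
    flipXB W r₀ (2, P ++ [3]) = (0, 6 :: (P ++ [0])) ∧
      flipXB W r₀ (0, 6 :: (P ++ [0])) = (2, P ++ [3]) := by
  have hidx (k : ℕ) (hk : k ≤ 2) : (r₀ + W.length - k) % W.length = (flat P).length + 2 - k := by
    rw [hW, hr₀, show (flat P).length + 2 + ((flat P).length + 3) - k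
      = (flat P).length + 2 - k + ((flat P).length + 3) by omega, Nat.add_mod_right,
      Nat.mod_eq_of_lt (by omega)]
  constructor
  · rw [flipXB_append_cons (by rw [hidx 2 le_rfl]; simp)]
    simp [toggle]
  · rw [show 6 :: (P ++ [0]) = (6 :: P) ++ [0] from rfl,
      flipXB_append_cons (by rw [hidx 0 (by omega)]; simp)]
    simp [toggle]

def IsPartner (W : PWord) (r₀ : ℕ) (x y : ℕ × List (Fin 9)) : Prop :=
  IsParsing W y ∧ y.1 < W.length ∧ flipXB W r₀ x = y ∧ flipXB W r₀ y = x ∧ value y = -value x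

lemma IsPartner.symm {W : PWord} {r₀ : ℕ} {x y : ℕ × List (Fin 9)} (hx : IsParsing W x)
    (hxW : x.1 < W.length) (h : IsPartner W r₀ x y) : IsPartner W r₀ y x :=
  ⟨hx, hxW, h.2.2.2.1, h.2.2.1, by rw [h.2.2.2.2, neg_neg]⟩

lemma isPartner_split {W : PWord} {r₀ r : ℕ} {P Q : List (Fin 9)}
    (hP : (flat P).length = (r₀ + W.length - r) % W.length) (hx : IsParsing W (r, P ++ 3 :: Q))
    (hrW : r < W.length) (hQr : ¬(Q = [] ∧ r = 2)) :
    IsPartner W r₀ (r, P ++ 3 :: Q) (r, P ++ 0 :: 6 :: Q) :=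
  ⟨isParsing_split_iff.2 ⟨hx, hQr⟩, hrW, by simp [flipXB_append_cons hP, toggle, hQr],
    by simp [flipXB_append_cons hP, toggle], value_split _ _ _ _⟩

lemma isPartner_wrap {W : PWord} {r₀ : ℕ} {P : List (Fin 9)}
    (hW : W.length = (flat P).length + 3) (hr₀ : r₀ = (flat P).length + 2)
    (hx : IsParsing W (2, P ++ [3])) :
    IsPartner W r₀ (2, P ++ [3]) (0, 6 :: (P ++ [0])) :=
  ⟨isParsing_wrap_iff.2 hx, by omega, (flipXB_wrap hW hr₀).1, (flipXB_wrap hW hr₀).2,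
    value_wrap _ _ _⟩

lemma isPartner_flipXB {W : PWord} {r₀ : ℕ} (hr₀ : r₀ < W.length) (hXB : [X, B] <+: W.rotate r₀)
    {x : ℕ × List (Fin 9)} (hx : IsParsing W x) (hxW : x.1 < W.length) :
    IsPartner W r₀ x (flipXB W r₀ x) := by
  suffices ∃ y, IsPartner W r₀ x y by
    obtain ⟨y, hy⟩ := this
    rwa [hy.2.2.1]
  obtain ⟨r, l⟩ := x
  have hl := ((isParsing_iff W r l).1 hx).1
  have hlen : (flat l).length = W.length := by rw [hl, List.length_rotate]
  obtain ⟨P, Q, rfl, hP, hQ⟩ := exists_split_at_XB hr₀ hXB hxW hl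
  rcases hQ with ⟨Q, rfl⟩ | ⟨Q, rfl⟩ | ⟨rfl, P, rfl⟩
  · by_cases hQr : Q = [] ∧ r = 2
    · obtain ⟨rfl, rfl⟩ := hQr
      have hW : W.length = (flat P).length + 3 := by simp [← hlen]
      have hmark := (add_sub_mod_eq_iff hr₀ (by omega) (by omega)).1 hP.symm
      rw [Nat.mod_eq_of_lt (by omega)] at hmark
      exact ⟨_, isPartner_wrap hW (by omega) hx⟩
    · exact ⟨_, isPartner_split hP hx hxW hQr⟩
  · obtain ⟨hx', hQr⟩ := isParsing_split_iff.1 hx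
    exact ⟨_, (isPartner_split hP hx' hxW hQr).symm hx' hxW⟩
  · have hW : W.length = (flat P).length + 3 := by simp [← hlen]
    obtain rfl : r = 0 := by
      obtain ⟨-, a, ha, hra⟩ := (isParsing_iff W r _).1 hx
      obtain rfl : a = 0 := by simpa [List.getLast?_cons] using ha.symm
      simpa using hra
    rw [Nat.sub_zero, Nat.add_mod_right, Nat.mod_eq_of_lt hr₀, flat_cons, wordOf_six,
      List.length_append] at hP
    have hx' := isParsing_wrap_iff.1 hx
    exact ⟨_, (isPartner_wrap hW (by simp only [List.length_cons] at hP; omega) hx').symm hx'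
      (by omega)⟩

def candidates (N : ℕ) : Finset (ℕ × List (Fin 9)) :=
  (Finset.range N ×ˢ (Finset.range (N + 1)).sigma
    fun k => (Finset.univ : Finset (Fin k → Fin 9))).image fun p => (p.1, List.ofFn p.2.2)

lemma mem_candidates {N : ℕ} {x : ℕ × List (Fin 9)} :
    x ∈ candidates N ↔ x.1 < N ∧ x.2.length ≤ N := by
  constructor
  · rintro hx
    obtain ⟨⟨r, k, f⟩, hp, rfl⟩ := Finset.mem_image.1 hx
    simp only [Finset.mem_product, Finset.mem_range, Finset.mem_sigma] at hp
    simp only [List.length_ofFn]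
    omega
  · rintro ⟨h₁, h₂⟩
    refine Finset.mem_image.2 ⟨(x.1, ⟨x.2.length, x.2.get⟩), ?_, by simp⟩
    simp only [Finset.mem_product, Finset.mem_range, Finset.mem_sigma, Finset.mem_univ, and_true]
    omega

lemma origCycVal_eq_sum (W : PWord) :
    origCycVal W = ∑ x ∈ (candidates W.length).filter (IsParsing W), value x := by
  rw [Finset.sum_filter, candidates, Finset.sum_image, Finset.sum_product, origCycVal]
  · simp_rw [Finset.sum_sigma]
    rfl
  · rintro ⟨r, k, f⟩ - ⟨r', k', f'⟩ - h
    simp only [Prod.mk.injEq, List.ofFn_inj'] at h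
    simp [h]

theorem origCycVal_eq_zero_of_XB_prefix {W : PWord} {r₀ : ℕ} (hr₀ : r₀ < W.length)
    (hXB : [X, B] <+: W.rotate r₀) : origCycVal W = 0 := by
  have hspec {x} (hx : x ∈ (candidates W.length).filter (IsParsing W)) :=
    have hx' := Finset.mem_filter.1 hx
    isPartner_flipXB hr₀ hXB hx'.2 (mem_candidates.1 hx'.1).1
  rw [origCycVal_eq_sum]
  refine Finset.sum_involution (fun x _ => flipXB W r₀ x) (fun x hx => ?_) (fun x hx hne => ?_)
    (fun x hx => ?_) (fun x hx => (hspec hx).2.2.2.1)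
  · rw [(hspec hx).2.2.2.2, add_neg_cancel]
  · exact fun heq => hne (CharZero.neg_eq_self_iff.1 (heq ▸ (hspec hx).2.2.2.2).symm)
  · obtain ⟨h₁, h₂, -⟩ := hspec hx
    exact Finset.mem_filter.2 ⟨mem_candidates.2 ⟨h₂, length_le_of_isParsing h₁⟩, h₁⟩

end XBCancellation

/-- If the cyclic sentence `(W)` contains the substring `XB` (read cyclically), then
its value in the original puzzle vanishes: `|(W)| = 0`. -/
theorem cyclic_XB_vanishes (W : PWord)
    (h : ∃ r : ℕ, [PLetter.X, PLetter.B] <+: W.rotate r) :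
    origCycVal W = 0 := by
  obtain ⟨r, hr⟩ := h
  have hW : 0 < W.length := by simpa using hr.length_le.trans_lt' (by simp)
  exact XBCancellation.origCycVal_eq_zero_of_XB_prefix (Nat.mod_lt r hW)
    (by rwa [List.rotate_mod])
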